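/- arXiv:1004.2626 — 3 statements merged into one kernel-verified Lean document; each statement's English description precedes it below -/
import Mathlib

section
/- Simultaneous Hall condition (necessity): Let G be an overlapping bipartite graph with parts A = S ∪ T (S ∩ T ≠ ∅) and B. If there exists a simultaneous matching M ⊆ E (i.e., M ∩ (S × B) is a matching covering S and M ∩ (T × B) is a matching covering T), then for every subset P ⊆ A, |N(P)| + |N(P^S) ∩ N(P^T)| ≥ |P|, where P^S = P ∩ (S \ T), P^T = P ∩ (T \ S). -/
open Finset

variable {V W : Type*} [DecidableEq V] [DecidableEq W]

/-- Neighborhood of a set `P` of left vertices in the bipartite graph with edge set `E`. -/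
def nbhd (E : Finset (V × W)) (P : Finset V) : Finset W :=
  (E.filter (fun e => e.1 ∈ P)).image Prod.snd

/-- A set of pairwise non-adjacent edges. -/
def IsMatching (M : Finset (V × W)) : Prop :=
  ∀ e ∈ M, ∀ f ∈ M, e ≠ f → e.1 ≠ f.1 ∧ e.2 ≠ f.2

/-- Every vertex of `S` is incident to an edge of `M`. -/
def Covers (M : Finset (V × W)) (S : Finset V) : Prop :=
  ∀ s ∈ S, ∃ e ∈ M, e.1 = s

/-- `M` is a simultaneous matching: `M ∩ (S × B)` is a matching covering `S` and
`M ∩ (T × B)` is a matching covering `T`. -/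
def SimMatching (E M : Finset (V × W)) (S T : Finset V) : Prop :=
  M ⊆ E ∧
  IsMatching (M.filter (fun e => e.1 ∈ S)) ∧ Covers (M.filter (fun e => e.1 ∈ S)) S ∧
  IsMatching (M.filter (fun e => e.1 ∈ T)) ∧ Covers (M.filter (fun e => e.1 ∈ T)) T

/-! Send each vertex of `P ∩ S` to its partner in the matching on `S`, and each vertex of `P^T`
to its partner in the matching on `T`. The two images have sizes `|P ∩ S|` and `|P^T|`, summing to
`|P|`, and lie in `N(P)`. A vertex `w` in both is the partner of some `p ∈ P ∩ S` and some
`q ∈ P^T`; were `p ∈ T`, the distinct `p` and `q` would share `w` in the matching on `T`, so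
`p ∈ P^S` and `w ∈ N(P^S) ∩ N(P^T)`. Inclusion–exclusion gives the bound. -/

theorem mem_nbhd {E : Finset (V × W)} {P : Finset V} {w : W} :
    w ∈ nbhd E P ↔ ∃ v ∈ P, (v, w) ∈ E := by
  simp [nbhd, and_comm]

theorem nbhd_mono {E E' : Finset (V × W)} {P P' : Finset V} (hE : E ⊆ E') (hP : P ⊆ P') :
    nbhd E P ⊆ nbhd E' P' := by
  intro w hw
  obtain ⟨v, hv, hvw⟩ := mem_nbhd.1 hw
  exact mem_nbhd.2 ⟨v, hP hv, hE hvw⟩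

theorem nbhd_filter_fst_mem {M : Finset (V × W)} {Q U : Finset V} (hQU : Q ⊆ U) :
    nbhd (M.filter (fun e => e.1 ∈ U)) Q = nbhd M Q := by
  ext w
  simp only [mem_nbhd, mem_filter]
  exact ⟨fun ⟨v, hv, hvw, _⟩ => ⟨v, hv, hvw⟩, fun ⟨v, hv, hvw⟩ => ⟨v, hv, hvw, hQU hv⟩⟩

namespace IsMatching

variable {M : Finset (V × W)}

section

omit [DecidableEq V] [DecidableEq W]

theorem injOn_fst (hM : IsMatching M) : Set.InjOn Prod.fst (M : Set (V × W)) :=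
  fun e he f hf h => by_contra fun hne => (hM e he f hf hne).1 h

theorem injOn_snd (hM : IsMatching M) : Set.InjOn Prod.snd (M : Set (V × W)) :=
  fun e he f hf h => by_contra fun hne => (hM e he f hf hne).2 h

theorem fst_eq_of_snd_eq (hM : IsMatching M) {v v' : V} {w : W} (h : (v, w) ∈ M)
    (h' : (v', w) ∈ M) : v = v' :=
  congrArg Prod.fst (hM.injOn_snd h h' rfl)

end

theorem card_nbhd (hM : IsMatching M) {Q : Finset V} (hQ : Covers M Q) :
    (nbhd M Q).card = Q.card := by
  set F := M.filter (fun e => e.1 ∈ Q)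
  have hFM : (F : Set (V × W)) ⊆ M := coe_subset.2 (filter_subset _ _)
  have hfst : F.image Prod.fst = Q := by
    ext v
    simp only [mem_image, mem_filter, F]
    constructor
    · rintro ⟨e, ⟨-, he⟩, rfl⟩
      exact he
    · intro hv
      obtain ⟨e, he, rfl⟩ := hQ v hv
      exact ⟨e, ⟨he, hv⟩, rfl⟩
  calc (nbhd M Q).card = F.card := card_image_of_injOn (hM.injOn_snd.mono hFM)
    _ = Q.card := by rw [← hfst, card_image_of_injOn (hM.injOn_fst.mono hFM)]

end IsMatching

theorem inter_sdiff_eq_sdiff_of_subset_union {P S T : Finset V} (hP : P ⊆ S ∪ T) :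
    P ∩ (T \ S) = P \ S := by
  ext v
  have := @hP v
  simp only [mem_inter, mem_sdiff, mem_union] at this ⊢
  tauto

theorem nbhd_inter_subset_nbhd_sdiff {M : Finset (V × W)} {P S T : Finset V}
    (hMT : IsMatching (M.filter (fun e => e.1 ∈ T))) :
    nbhd M (P ∩ S) ∩ nbhd M (P ∩ (T \ S)) ⊆ nbhd M (P ∩ (S \ T)) ∩ nbhd M (P ∩ (T \ S)) := by
  intro w hw
  obtain ⟨⟨p, hp, hpw⟩, ⟨q, hq, hqw⟩⟩ := And.imp mem_nbhd.1 mem_nbhd.1 (mem_inter.1 hw)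
  simp only [mem_inter, mem_sdiff] at hp hq
  have hpT : p ∉ T := fun hpT => hq.2.2 <|
    hMT.fst_eq_of_snd_eq (mem_filter.2 ⟨hpw, hpT⟩) (mem_filter.2 ⟨hqw, hq.2.1⟩) ▸ hp.2
  exact mem_inter.2 ⟨mem_nbhd.2 ⟨p, mem_inter.2 ⟨hp.1, mem_sdiff.2 ⟨hp.2, hpT⟩⟩, hpw⟩,
    (mem_inter.1 hw).2⟩

theorem simHall_necessary_general (S T : Finset V) (E M : Finset (V × W))
    (hM : SimMatching E M S T) :
    ∀ P ⊆ S ∪ T,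
      P.card ≤ (nbhd E P).card +
        (nbhd E (P ∩ (S \ T)) ∩ nbhd E (P ∩ (T \ S))).card := by
  obtain ⟨hME, hMS, hCS, hMT, hCT⟩ := hM
  intro P hP
  have hcardS : (nbhd M (P ∩ S)).card = (P ∩ S).card := by
    rw [← nbhd_filter_fst_mem inter_subset_right,
      hMS.card_nbhd fun s hs => hCS s (mem_inter.1 hs).2]
  have hcardT : (nbhd M (P ∩ (T \ S))).card = (P ∩ (T \ S)).card := by
    rw [← nbhd_filter_fst_mem (inter_subset_right.trans sdiff_subset),
      hMT.card_nbhd fun t ht => hCT t (sdiff_subset (mem_inter.1 ht).2)]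
  have hunion : nbhd M (P ∩ S) ∪ nbhd M (P ∩ (T \ S)) ⊆ nbhd E P :=
    union_subset (nbhd_mono hME inter_subset_left) (nbhd_mono hME inter_subset_left)
  have hinter : nbhd M (P ∩ S) ∩ nbhd M (P ∩ (T \ S)) ⊆
      nbhd E (P ∩ (S \ T)) ∩ nbhd E (P ∩ (T \ S)) :=
    (nbhd_inter_subset_nbhd_sdiff hMT).trans
      (inter_subset_inter (nbhd_mono hME subset_rfl) (nbhd_mono hME subset_rfl))
  calc P.card = (P ∩ S).card + (P ∩ (T \ S)).card := by
        rw [inter_sdiff_eq_sdiff_of_subset_union hP, card_inter_add_card_sdiff]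
    _ = (nbhd M (P ∩ S) ∪ nbhd M (P ∩ (T \ S))).card +
          (nbhd M (P ∩ S) ∩ nbhd M (P ∩ (T \ S))).card := by
        rw [card_union_add_card_inter, hcardS, hcardT]
    _ ≤ _ := add_le_add (card_le_card hunion) (card_le_card hinter)

/-- Necessity of the simultaneous Hall condition. -/
theorem simHall_necessary (B : Finset W) (S T : Finset V) (E M : Finset (V × W))
    (hE : E ⊆ (S ∪ T) ×ˢ B) (hST : (S ∩ T).Nonempty)
    (hM : SimMatching E M S T) :
    ∀ P ⊆ S ∪ T,
      P.card ≤ (nbhd E P).card +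
        (nbhd E (P ∩ (S \ T)) ∩ nbhd E (P ∩ (T \ S))).card :=
  simHall_necessary_general S T E M hM
end

section
/- Extending a simultaneous matching by an edge (one-sided case): Let G be an overlapping bipartite graph with A = S ∪ T, let (u,v) ∈ E with u ∈ S \ T, and let G' be obtained from G by deleting vertex u and all edges (u', v) with u' ∈ S. If M' is a simultaneous matching in G', then M' ∪ {(u,v)} is a simultaneous matching in G. -/
open Finset

variable {V W : Type*} [DecidableEq V] [DecidableEq W]

theorem IsMatching.insert {M : Finset (V × W)} {e : V × W} (hM : IsMatching M)
    (he : ∀ f ∈ M, e.1 ≠ f.1 ∧ e.2 ≠ f.2) : IsMatching (insert e M) := by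
  intro a ha b hb hab
  rw [mem_insert] at ha hb
  rcases ha with rfl | ha <;> rcases hb with rfl | hb
  · exact absurd rfl hab
  · exact he b hb
  · exact (he a ha).imp Ne.symm Ne.symm
  · exact hM a ha b hb hab

theorem Covers.insert_of_erase {M : Finset (V × W)} {S : Finset V} {e : V × W}
    (h : Covers M (S.erase e.1)) : Covers (insert e M) S := by
  intro s hs
  by_cases hse : s = e.1
  · exact ⟨e, mem_insert_self e M, hse.symm⟩
  · obtain ⟨f, hf, rfl⟩ := h s (mem_erase.mpr ⟨hse, hs⟩)
    exact ⟨f, mem_insert_of_mem hf, rfl⟩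

theorem filter_fst_mem_erase {α β : Type*} [DecidableEq α] {M : Finset (α × β)}
    {S : Finset α} {a : α} (h : ∀ f ∈ M, f.1 ≠ a) :
    M.filter (·.1 ∈ S.erase a) = M.filter (·.1 ∈ S) :=
  filter_congr fun f hf => by simp [h f hf]

theorem simMatching_extend_one_sided_general (S T : Finset V) (E : Finset (V × W))
    (u : V) (v : W) (hu : u ∈ S \ T) (huv : (u, v) ∈ E)
    (M' : Finset (V × W))
    (hM' : SimMatching (E.filter (fun e => e.1 ≠ u ∧ ¬(e.1 ∈ S ∧ e.2 = v))) M'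
            (S.erase u) T) :
    SimMatching E (insert (u, v) M') S T := by
  obtain ⟨hsub, hmS, hcS, hmT, hcT⟩ := hM'
  obtain ⟨huS, huT⟩ := mem_sdiff.mp hu
  have hM'E : ∀ f ∈ M', f ∈ E ∧ f.1 ≠ u ∧ ¬(f.1 ∈ S ∧ f.2 = v) :=
    fun f hf => mem_filter.mp (hsub hf)
  have hS : M'.filter (·.1 ∈ S.erase u) = M'.filter (·.1 ∈ S) :=
    filter_fst_mem_erase fun f hf => (hM'E f hf).2.1
  have hinsS : (insert (u, v) M').filter (·.1 ∈ S) = insert (u, v) (M'.filter (·.1 ∈ S)) := by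
    rw [filter_insert, if_pos huS]
  have hinsT : (insert (u, v) M').filter (·.1 ∈ T) = M'.filter (·.1 ∈ T) := by
    rw [filter_insert, if_neg huT]
  rw [hS] at hmS hcS
  refine ⟨insert_subset huv fun f hf => (hM'E f hf).1, ?_, ?_, hinsT ▸ hmT, hinsT ▸ hcT⟩
  · rw [hinsS]
    refine hmS.insert fun f hf => ?_
    obtain ⟨hfM', hfS⟩ := mem_filter.mp hf
    obtain ⟨-, hfu, hfv⟩ := hM'E f hfM'
    exact ⟨hfu.symm, fun hvf => hfv ⟨hfS, hvf.symm⟩⟩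
  · rw [hinsS]
    exact Covers.insert_of_erase hcS

/-- Extending a simultaneous matching by an edge `(u,v)` with `u ∈ S \ T`:
delete `u` and all edges `(u',v)` with `u' ∈ S`. -/
theorem simMatching_extend_one_sided (B : Finset W) (S T : Finset V) (E : Finset (V × W))
    (hE : E ⊆ (S ∪ T) ×ˢ B) (hST : (S ∩ T).Nonempty)
    (u : V) (v : W) (hu : u ∈ S \ T) (huv : (u, v) ∈ E)
    (M' : Finset (V × W))
    (hM' : SimMatching (E.filter (fun e => e.1 ≠ u ∧ ¬(e.1 ∈ S ∧ e.2 = v))) M'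
            (S.erase u) T) :
    SimMatching E (insert (u, v) M') S T :=
  simMatching_extend_one_sided_general S T E u v hu huv M' hM'
end

section
/- Pathological instance is unsatisfiable: For n ≥ 1, let X₁,…,Xₙ, Y₁,…,Y₂ₙ, Z₁,…,Zₙ be integer variables with domains D(Xᵢ) = [1, 2n−1], D(Yᵢ) = [1, 4n−1], D(Zᵢ) = [2n, 4n−1]. Then there is no assignment making all of X ∪ Y pairwise distinct and all of Y ∪ Z pairwise distinct simultaneously. -/
/-!
Every value of `y` lies in `[1, 2n-1]` or in `[2n, 4n-1]`. In the first block it must avoid the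
`n` distinct values of `x`, in the second the `n` distinct values of `z`, so `y` takes at most
`(2n - 1 - n) + (2n - n) = 2n - 1` distinct values, yet it is injective on `2n` indices.
-/

open Finset

namespace Finset

variable {α : Type*} [DecidableEq α]

theorem card_inter_add_card_le_of_disjoint {s t u : Finset α} (hst : Disjoint s t)
    (htu : t ⊆ u) : #(s ∩ u) + #t ≤ #u := by
  rw [← card_union_of_disjoint (disjoint_of_subset_left inter_subset_left hst)]
  exact card_le_card (union_subset inter_subset_right htu)

theorem card_le_card_inter_add_card_inter {s a b : Finset α} (h : s ⊆ a ∪ b) :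
    #s ≤ #(s ∩ a) + #(s ∩ b) := by
  calc #s = #(s ∩ a ∪ s ∩ b) := by rw [← inter_union_distrib_left, inter_eq_left.mpr h]
    _ ≤ #(s ∩ a) + #(s ∩ b) := card_union_le _ _

/-- A Hall-type bound for two overlapping families of pairwise distinct values. -/
theorem card_add_card_add_card_le {X Y Z A B : Finset α} (hXY : Disjoint X Y)
    (hYZ : Disjoint Y Z) (hXA : X ⊆ A) (hZB : Z ⊆ B) (hY : Y ⊆ A ∪ B) :
    #X + #Y + #Z ≤ #A + #B := by
  have hA := card_inter_add_card_le_of_disjoint hXY.symm hXA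
  have hB := card_inter_add_card_le_of_disjoint hYZ hZB
  have := card_le_card_inter_add_card_inter hY
  omega

end Finset

section SumElim

variable {ι κ α : Type*} [Fintype ι] [Fintype κ] [DecidableEq α] {f : ι → α} {g : κ → α}

theorem Function.Injective.disjoint_image_univ_of_sumElim (h : (Sum.elim f g).Injective) :
    Disjoint (univ.image f) (univ.image g) := by
  simp only [disjoint_left, mem_image, mem_univ, true_and, not_exists]
  rintro _ ⟨i, rfl⟩ j hji
  exact Sum.inr_ne_inl (h hji)

theorem Function.Injective.card_image_univ_fin {n : ℕ} {f : Fin n → α} (hf : f.Injective) :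
    #(univ.image f) = n := by
  rw [card_image_of_injective _ hf, card_univ, Fintype.card_fin]

theorem image_univ_subset_of_forall_mem {f : ι → α} {s : Finset α} (h : ∀ i, f i ∈ s) :
    univ.image f ⊆ s :=
  image_subset_iff.mpr fun i _ ↦ h i

end SumElim

theorem Int.Icc_subset_Icc_sub_one_union_Icc (a b c : ℤ) :
    Icc a c ⊆ Icc a (b - 1) ∪ Icc b c := by
  intro v
  simp only [mem_union, mem_Icc]
  omega

/-- The pathological instance `Iₙ` is unsatisfiable: there is no assignment with
`X` in `[1,2n-1]`, `Y` in `[1,4n-1]`, `Z` in `[2n,4n-1]` making both `X ∪ Y` and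
`Y ∪ Z` sets of pairwise distinct values. -/
theorem pathological_unsat (n : ℕ) (hn : 1 ≤ n) :
    ¬ ∃ (x : Fin n → ℤ) (y : Fin (2 * n) → ℤ) (z : Fin n → ℤ),
      (∀ i, x i ∈ Finset.Icc (1 : ℤ) (2 * n - 1)) ∧
      (∀ i, y i ∈ Finset.Icc (1 : ℤ) (4 * n - 1)) ∧
      (∀ i, z i ∈ Finset.Icc ((2 * n : ℕ) : ℤ) (4 * n - 1)) ∧
      Function.Injective (Sum.elim x y) ∧
      Function.Injective (Sum.elim y z) := by
  rintro ⟨x, y, z, hx, hy, hz, hxy, hyz⟩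
  have hsplit :
      Icc (1 : ℤ) (4 * n - 1) ⊆ Icc 1 (2 * n - 1) ∪ Icc ((2 * n : ℕ) : ℤ) (4 * n - 1) := by
    simpa using Int.Icc_subset_Icc_sub_one_union_Icc 1 (2 * n) (4 * n - 1)
  have hcard := card_add_card_add_card_le hxy.disjoint_image_univ_of_sumElim
    hyz.disjoint_image_univ_of_sumElim (image_univ_subset_of_forall_mem hx)
    (image_univ_subset_of_forall_mem hz) ((image_univ_subset_of_forall_mem hy).trans hsplit)
  have hxinj : x.Injective := hxy.comp Sum.inl_injective
  have hyinj : y.Injective := hxy.comp Sum.inr_injective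
  have hzinj : z.Injective := hyz.comp Sum.inr_injective
  rw [hxinj.card_image_univ_fin, hyinj.card_image_univ_fin, hzinj.card_image_univ_fin,
    Int.card_Icc, Int.card_Icc] at hcard
  omega
end
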